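/- Let G be a connected simple graph on a finite nonempty vertex type V satisfying the cycle condition, let A be a finite type of agents, let f₀ : A → V be an injective configuration, and let g : A → V assign a destination to each agent. Then there exist k ≤ diam(G) · |A| and configurations f₀, f₁, …, f_k such that each consecutive pair is a valid one-step transition and for every agent a there exists a timestep t ≤ k with f_t(a) = g(a). (Existential content of Theorem 3.5 of the paper: if G satisfies the cycle condition, PIBT lets all agents reach their own destinations within diam(G)·|A| timesteps after the destinations are given; note that the agents need not be at their goals simultaneously.) -/

import Mathlib

/-- A valid one-step transition between configurations of agents on a graph:
no vertex conflict, every agent stays or moves along an edge, and no swap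
conflict. -/
def ValidStep {V A : Type*} (G : SimpleGraph V) (f f' : A → V) : Prop :=
  Function.Injective f' ∧
  (∀ a, f' a = f a ∨ G.Adj (f a) (f' a)) ∧
  (∀ a b, a ≠ b → ¬(f' a = f b ∧ f' b = f a))

/-- `G` satisfies the cycle condition if for every pair of adjacent vertices
`u, v` there is a cycle from `u` to `u` whose second vertex is `v`. -/
def CycleCond {V : Type*} (G : SimpleGraph V) : Prop :=
  ∀ u v : V, G.Adj u v → ∃ c : G.Walk u u, c.IsCycle ∧ c.getVert 1 = v

/-!
Under the cycle condition a single agent can be pushed along any edge `(f a, v)` in one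
valid step: rotate every agent sitting on a cycle through that edge one position forward.
The rotation is injective, moves agents only along edges, and, the cycle having length at
least 3, swaps no two agents. So the agents can be served one after another: each walks to
its goal along a shortest path, of length at most `diam G`, while the rotations carry the
others around.
-/

lemma List.formPerm_apply_formPerm_apply_ne {α : Type*} [DecidableEq α] {l : List α}
    (hl : l.Nodup) (h3 : 3 ≤ l.length) {x : α} (hx : x ∈ l) :
    l.formPerm (l.formPerm x) ≠ x := by
  obtain ⟨i, hi, rfl⟩ := List.getElem_of_mem hx
  intro h
  rw [← Equiv.Perm.mul_apply, ← sq, List.formPerm_pow_apply_getElem l hl, hl.getElem_inj_iff] at h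
  have h2 : 2 ≡ 0 [MOD l.length] :=
    Nat.ModEq.add_left_cancel' i (by simpa [Nat.ModEq, Nat.mod_eq_of_lt hi] using h)
  have := Nat.le_of_dvd two_pos (Nat.modEq_zero_iff_dvd.mp h2)
  omega

namespace SimpleGraph.Walk

variable {V : Type*} {G : SimpleGraph V} {u : V} {c : G.Walk u u}

lemma getElem_support_tail {v : V} (p : G.Walk u v) (i : ℕ) (hi : i < p.support.tail.length) :
    p.support.tail[i] = p.getVert (i + 1) := by
  rw [List.getElem_tail, support_getElem_eq_getVert]

variable [DecidableEq V]

lemma IsCycle.formPerm_support_tail_apply_start (hc : c.IsCycle) :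
    c.support.tail.formPerm u = c.getVert 1 := by
  have h3 := hc.three_le_length
  have hlast : c.support.tail[c.length - 1]'(by simp; omega) = u := by
    rw [getElem_support_tail, Nat.sub_add_cancel (by omega), getVert_length]
  have := List.formPerm_apply_getElem _ hc.support_nodup (c.length - 1) (by simp; omega)
  rw [hlast, getElem_support_tail] at this
  simpa [Nat.sub_add_cancel (by omega : 1 ≤ c.length)] using this

lemma IsCycle.adj_formPerm_support_tail (hc : c.IsCycle) {x : V} (hx : x ∈ c.support.tail) :
    G.Adj x (c.support.tail.formPerm x) := by
  obtain ⟨i, hi, rfl⟩ := List.getElem_of_mem hx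
  have hi' : i < c.length := by simpa using hi
  rw [List.formPerm_apply_getElem _ hc.support_nodup, getElem_support_tail, getElem_support_tail]
  simp only [List.length_tail, length_support, Nat.add_sub_cancel]
  rcases (Nat.succ_le_of_lt hi').lt_or_eq with hlt | heq
  · rw [Nat.mod_eq_of_lt hlt]
    exact c.adj_getVert_succ hlt
  · rw [← Nat.succ_eq_add_one, heq, Nat.mod_self, getVert_length]
    simpa using c.adj_getVert_succ (i := 0) (by omega)

end SimpleGraph.Walk

def VisitsGoalsWithin {V A : Type*} (G : SimpleGraph V) (g : A → V) (S : Finset A) (n : ℕ)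
    (f : A → V) : Prop :=
  ∃ k ≤ n, ∃ F : ℕ → A → V, F 0 = f ∧ (∀ t < k, ValidStep G (F t) (F (t + 1))) ∧
    ∀ a ∈ S, ∃ t ≤ k, F t a = g a

section

variable {V A : Type*} {G : SimpleGraph V}

lemma validStep_perm_comp {σ : Equiv.Perm V} (hadj : ∀ x, σ x = x ∨ G.Adj x (σ x))
    (hswap : ∀ x, σ (σ x) = x → σ x = x) {f : A → V} (hf : Function.Injective f) :
    ValidStep G f (σ ∘ f) := by
  refine ⟨σ.injective.comp hf, fun a => hadj (f a), fun a b hab ⟨hab', hba'⟩ => hab (hf ?_)⟩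
  simp only [Function.comp_apply] at hab' hba'
  have hfix : σ (f a) = f a := hswap (f a) (by rw [hab', hba'])
  exact hfix.symm.trans hab'

lemma CycleCond.exists_validStep (hG : CycleCond G) {f : A → V} (hf : Function.Injective f)
    {a : A} {v : V} (h : G.Adj (f a) v) : ∃ f', ValidStep G f f' ∧ f' a = v := by
  classical
  obtain ⟨c, hc, hcv⟩ := hG _ _ h
  refine ⟨c.support.tail.formPerm ∘ f, validStep_perm_comp (fun x => ?_) (fun x hx => ?_) hf, ?_⟩
  · by_cases hx : x ∈ c.support.tail
    · exact .inr (hc.adj_formPerm_support_tail hx)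
    · exact .inl (List.formPerm_apply_of_notMem hx)
  · by_contra hne
    exact List.formPerm_apply_formPerm_apply_ne hc.support_nodup
      (by simpa using hc.three_le_length) (List.mem_of_formPerm_apply_ne hne) hx
  · simp [hc.formPerm_support_tail_apply_start, hcv]

namespace VisitsGoalsWithin

variable {g : A → V} {S : Finset A} {n : ℕ} {f : A → V}

lemma empty : VisitsGoalsWithin G g ∅ 0 f :=
  ⟨0, le_rfl, fun _ => f, rfl, by simp, by simp⟩

lemma mono (h : VisitsGoalsWithin G g S n f) {m : ℕ} (hnm : n ≤ m) :
    VisitsGoalsWithin G g S m f := by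
  obtain ⟨k, hk, hrun⟩ := h
  exact ⟨k, hk.trans hnm, hrun⟩

lemma of_validStep {f' : A → V} (hstep : ValidStep G f f') (h : VisitsGoalsWithin G g S n f') :
    VisitsGoalsWithin G g S (n + 1) f := by
  obtain ⟨k, hk, F, hF0, hFstep, hFgoal⟩ := h
  refine ⟨k + 1, by omega, fun | 0 => f | t + 1 => F t, rfl, fun t ht => ?_, fun a ha => ?_⟩
  · cases t with
    | zero => simpa [hF0] using hstep
    | succ t => exact hFstep t (by omega)
  · obtain ⟨t, ht, hFt⟩ := hFgoal a ha
    exact ⟨t + 1, by omega, hFt⟩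

variable [DecidableEq A]

lemma insert_of_eq (h : VisitsGoalsWithin G g S n f) {a : A} (ha : f a = g a) :
    VisitsGoalsWithin G g (insert a S) n f := by
  obtain ⟨k, hk, F, hF0, hFstep, hFgoal⟩ := h
  refine ⟨k, hk, F, hF0, hFstep, fun b hb => ?_⟩
  rcases Finset.mem_insert.mp hb with rfl | hb
  · exact ⟨0, k.zero_le, hF0 ▸ ha⟩
  · exact hFgoal b hb

lemma insert_of_walk (hG : CycleCond G)
    (h : ∀ f : A → V, Function.Injective f → VisitsGoalsWithin G g S n f) {a : A} {u w : V}
    (p : G.Walk u w) (hw : w = g a) (f : A → V) (hf : Function.Injective f) (hfa : f a = u) :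
    VisitsGoalsWithin G g (insert a S) (n + p.length) f := by
  induction p generalizing f with
  | nil => exact (h f hf).insert_of_eq (hfa.trans hw)
  | cons hadj q ih =>
    obtain ⟨f', hstep, hf'a⟩ := hG.exists_validStep hf (hfa ▸ hadj)
    exact of_validStep hstep (ih hw f' hstep.1 hf'a)

end VisitsGoalsWithin

lemma visitsGoalsWithin_diam_mul_card [Finite V] (hconn : G.Connected)
    (hG : CycleCond G) (g : A → V) (S : Finset A) (f : A → V) (hf : Function.Injective f) :
    VisitsGoalsWithin G g S (G.diam * S.card) f := by
  classical
  have := hconn.nonempty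
  induction S using Finset.induction_on generalizing f with
  | empty => exact .empty
  | @insert a S ha ih =>
    obtain ⟨p, hp⟩ := (hconn.preconnected (f a) (g a)).exists_walk_length_eq_dist
    have hpD : p.length ≤ G.diam :=
      hp ▸ SimpleGraph.dist_le_diam (SimpleGraph.connected_iff_ediam_ne_top.mp hconn)
    refine (VisitsGoalsWithin.insert_of_walk hG ih p rfl f hf rfl).mono ?_
    rw [Finset.card_insert_of_notMem ha, mul_add_one]
    omega

end

theorem all_agents_reach_goals_general
    {V A : Type*} [Fintype V] [Fintype A] (G : SimpleGraph V)
    (hconn : G.Connected) (hG : CycleCond G)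
    (f0 : A → V) (hf0 : Function.Injective f0)
    (g : A → V) :
    ∃ k ≤ G.diam * Fintype.card A, ∃ F : ℕ → (A → V), F 0 = f0 ∧
      (∀ t, t < k → ValidStep G (F t) (F (t + 1))) ∧
      (∀ a : A, ∃ t ≤ k, F t a = g a) := by
  obtain ⟨k, hk, F, hF0, hFstep, hFgoal⟩ :=
    visitsGoalsWithin_diam_mul_card hconn hG g Finset.univ f0 hf0
  exact ⟨k, hk, F, hF0, hFstep, fun a => hFgoal a (Finset.mem_univ a)⟩

/-- Theorem 3.5 (existential content): if `G` satisfies the cycle condition,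
all agents can reach their own destinations within `diam(G) * |A|` timesteps
via valid one-step transitions (not necessarily simultaneously). -/
theorem all_agents_reach_goals
    {V A : Type*} [Fintype V] [Nonempty V] [Fintype A] (G : SimpleGraph V)
    (hconn : G.Connected) (hG : CycleCond G)
    (f0 : A → V) (hf0 : Function.Injective f0)
    (g : A → V) :
    ∃ k ≤ G.diam * Fintype.card A, ∃ F : ℕ → (A → V), F 0 = f0 ∧
      (∀ t, t < k → ValidStep G (F t) (F (t + 1))) ∧
      (∀ a : A, ∃ t ≤ k, F t a = g a) :=
  all_agents_reach_goals_general G hconn hG f0 hf0 g
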